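/- arXiv:1112.2986 — 2 statements merged into one kernel-verified Lean document; each statement's English description precedes it below -/
import Mathlib

section
/- The countable Gaussian family G_m strongly separates points of ℝ^m: for every x ∈ ℝ^m and every δ > 0 there exist n ∈ ℕ, rationals q_1,…,q_n > 0 and points x_1,…,x_n ∈ ℚ^m such that the function φ(y) = exp(−Σ_{j=1}^n q_j |y − x_j|²) satisfies inf{ |φ(x) − φ(y)| : y ∈ ℝ^m, |x − y| > δ } > 0. -/
open scoped BigOperators

/-- A member of the countable Gaussian family `G_m`: the function
`y ↦ exp(−Σ_{j=1}^n q_j |y − x_j|²)` on `ℝ^m`, with rational `q_j` and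
rational points `x_j ∈ ℚ^m`. -/
noncomputable def gaussFn {m : ℕ} (n : ℕ) (q : Fin n → ℚ) (xs : Fin n → Fin m → ℚ)
    (y : EuclideanSpace ℝ (Fin m)) : ℝ :=
  Real.exp (- ∑ j : Fin n,
    (q j : ℝ) * ‖y - (WithLp.equiv 2 (Fin m → ℝ)).symm (fun i => (xs j i : ℝ))‖ ^ 2)

/-- There is a rational point within any positive distance of any point of `ℝ^m`. -/
lemma exists_rat_point_near {m : ℕ} (x : EuclideanSpace ℝ (Fin m)) {ε : ℝ} (hε : 0 < ε) :
    ∃ p : Fin m → ℚ,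
      ‖x - (WithLp.equiv 2 (Fin m → ℝ)).symm (fun i => (p i : ℝ))‖ < ε := by
  have hε' : 0 < ε / (m + 1) := by positivity
  choose p hp using fun i => exists_rat_near (x i) hε'
  refine ⟨p, ?_⟩
  have hnorm : ‖x - (WithLp.equiv 2 (Fin m → ℝ)).symm (fun i => (p i : ℝ))‖
      = Real.sqrt (∑ i : Fin m, ‖x i - (p i : ℝ)‖ ^ 2) := by
    rw [EuclideanSpace.norm_eq]
    congr 1
  rw [hnorm]
  have hlt : (∑ i : Fin m, ‖x i - (p i : ℝ)‖ ^ 2) < ε ^ 2 := by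
    calc (∑ i : Fin m, ‖x i - (p i : ℝ)‖ ^ 2)
        ≤ ∑ _i : Fin m, (ε / (m + 1)) ^ 2 := by
          refine Finset.sum_le_sum fun i _ => ?_
          have := (hp i).le
          have h0 : (0:ℝ) ≤ ‖x i - (p i : ℝ)‖ := norm_nonneg _
          have : ‖x i - (p i : ℝ)‖ ≤ ε / (m + 1) := by
            simpa [Real.norm_eq_abs] using (hp i).le
          exact pow_le_pow_left₀ h0 this 2
      _ = m * (ε / (m + 1)) ^ 2 := by simp [Finset.sum_const, mul_comm]
      _ < ε ^ 2 := by
          have hm : (0:ℝ) < ((m:ℝ)+1)^2 := by positivity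
          have hmn : (0:ℝ) ≤ (m:ℝ) := Nat.cast_nonneg m
          rw [div_pow, mul_div_assoc', div_lt_iff₀ hm]
          nlinarith [pow_pos hε 2, mul_nonneg hmn (pow_pos hε 2).le, mul_nonneg (mul_nonneg hmn hmn) (pow_pos hε 2).le]
  calc Real.sqrt (∑ i : Fin m, ‖x i - (p i : ℝ)‖ ^ 2)
      < Real.sqrt (ε ^ 2) := by
        exact Real.sqrt_lt_sqrt (by positivity) hlt
    _ = ε := Real.sqrt_sq hε.le

/-- The countable Gaussian family strongly separates points of `ℝ^m`: for every
`x ∈ ℝ^m` and `δ > 0` there are `n ∈ ℕ`, positive rationals `q_1, …, q_n` and rational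
points `x_1, …, x_n ∈ ℚ^m` such that
`inf { |φ(x) − φ(y)| : |x − y| > δ } > 0` for `φ(y) = exp(−Σ_j q_j |y − x_j|²)`. -/
theorem gaussian_family_strongly_separates_points
    (m : ℕ) (x : EuclideanSpace ℝ (Fin m)) (δ : ℝ) (hδ : 0 < δ) :
    ∃ (n : ℕ) (q : Fin n → ℚ) (xs : Fin n → Fin m → ℚ),
      (∀ j, 0 < q j) ∧
      ∃ c > 0, ∀ y : EuclideanSpace ℝ (Fin m),
        δ < ‖x - y‖ → c ≤ |gaussFn n q xs x - gaussFn n q xs y| := by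
  obtain ⟨p, hp⟩ := exists_rat_point_near x (show (0:ℝ) < δ/4 by linarith)
  set z : EuclideanSpace ℝ (Fin m) :=
    (WithLp.equiv 2 (Fin m → ℝ)).symm (fun i => (p i : ℝ)) with hz
  refine ⟨1, fun _ => 1, fun _ => p, fun _ => one_pos,
    Real.exp (-(δ/4)^2) - Real.exp (-(3*δ/4)^2), ?_, ?_⟩
  · have : (δ/4)^2 < (3*δ/4)^2 := by nlinarith
    have := Real.exp_lt_exp.2 (neg_lt_neg this)
    linarith
  · intro y hy
    have hxz : ‖x - z‖ < δ/4 := hp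
    have hyz : 3*δ/4 < ‖y - z‖ := by
      have h1 : ‖x - y‖ ≤ ‖x - z‖ + ‖y - z‖ := by
        have := norm_sub_le (x - z) (y - z)
        simpa [sub_sub_sub_cancel_right] using this
      linarith
    have hgx : gaussFn 1 (fun _ => 1) (fun _ => p) x = Real.exp (-‖x - z‖^2) := by
      simp [gaussFn, hz]
    have hgy : gaussFn 1 (fun _ => 1) (fun _ => p) y = Real.exp (-‖y - z‖^2) := by
      simp [gaussFn, hz]
    rw [hgx, hgy]
    have hx2 : ‖x - z‖^2 ≤ (δ/4)^2 :=
      pow_le_pow_left₀ (norm_nonneg _) hxz.le 2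
    have hy2 : (3*δ/4)^2 ≤ ‖y - z‖^2 := by
      have h0 : (0:ℝ) ≤ 3*δ/4 := by linarith
      exact pow_le_pow_left₀ h0 hyz.le 2
    have e1 : Real.exp (-(δ/4)^2) ≤ Real.exp (-‖x - z‖^2) :=
      Real.exp_le_exp.2 (by linarith)
    have e2 : Real.exp (-‖y - z‖^2) ≤ Real.exp (-(3*δ/4)^2) :=
      Real.exp_le_exp.2 (by linarith)
    have : Real.exp (-(δ/4)^2) - Real.exp (-(3*δ/4)^2)
        ≤ Real.exp (-‖x - z‖^2) - Real.exp (-‖y - z‖^2) := by linarith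
    exact this.trans (le_abs_self _)
end

section
/- The Gaussian family G_m is convergence determining: if (μ_k) and μ are Borel probability measures on ℝ^m such that ∫ φ dμ_k → ∫ φ dμ as k → ∞ for every φ ∈ G_m, then μ_k converges weakly to μ, i.e., ∫ f dμ_k → ∫ f dμ for every bounded continuous f: ℝ^m → ℝ. -/
/-!
A Gaussian with at least one factor vanishes at infinity, so it extends continuously to the
one-point compactification of `ℝ^m`. There the Gaussian family is closed under multiplication,
contains `1` (the empty product) and separates points: `∞` from `y` because Gaussians are
positive on `ℝ^m`, and `x` from `y` by a Gaussian centred at a rational point close to `x`.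
By Stone–Weierstrass its span is dense, and integration against a probability measure is
`1`-Lipschitz for the sup norm, so the convergence of integrals extends to every continuous
function on the compactification, in particular to every compactly supported `g` on `ℝ^m`.
For probability measures this upgrades to weak convergence: cutting off a bounded `f ≥ 0` by
compactly supported `χₙ ↑ 1` gives `∫ f dμ ≤ liminf ∫ f dμₖ`.
-/

open MeasureTheory Filter
open scoped BigOperators Topology

open scoped BoundedContinuousFunction CompactlySupported ZeroAtInfty

section TendstoIntegral

variable {X ι : Type*} [TopologicalSpace X] [MeasurableSpace X] [OpensMeasurableSpace X]
  (μs : ι → Measure X) (L : Filter ι) (μ : Measure X)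

def tendstoIntegralSubmodule [∀ i, IsFiniteMeasure (μs i)] [IsFiniteMeasure μ] :
    Submodule ℝ (X →ᵇ ℝ) where
  carrier := {f | Tendsto (fun i => ∫ x, f x ∂μs i) L (𝓝 (∫ x, f x ∂μ))}
  add_mem' {f g} hf hg := by
    simpa only [Set.mem_ofPred_eq, BoundedContinuousFunction.coe_add, Pi.add_apply,
      integral_add (f.integrable _) (g.integrable _)] using hf.add hg
  zero_mem' := by simpa using tendsto_const_nhds
  smul_mem' c f hf := by
    simpa only [Set.mem_ofPred_eq, BoundedContinuousFunction.coe_smul, integral_smul]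
      using hf.const_smul c

lemma isClosed_tendstoIntegralSubmodule [∀ i, IsProbabilityMeasure (μs i)]
    [IsProbabilityMeasure μ] : IsClosed (tendstoIntegralSubmodule μs L μ : Set (X →ᵇ ℝ)) := by
  have lipschitz (ν : Measure X) [IsProbabilityMeasure ν] :
      LipschitzWith 1 fun f : X →ᵇ ℝ => ∫ x, f x ∂ν := by
    refine LipschitzWith.of_dist_le_mul fun f g => ?_
    rw [NNReal.coe_one, one_mul, Real.dist_eq, dist_eq_norm, ← integral_sub (f.integrable _)
      (g.integrable _)]
    exact (f - g).norm_integral_le_norm ν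
  exact (LipschitzWith.uniformEquicontinuous _ 1 fun i => lipschitz (μs i)).equicontinuous
    |>.isClosed_setOfPred_tendsto (lipschitz μ).continuous

end TendstoIntegral

section CompactlySupported

variable {X : Type*} [TopologicalSpace X] [R1Space X] [LocallyCompactSpace X]
  [SigmaCompactSpace X]

lemma exists_seq_hasCompactSupport_tendsto_one :
    ∃ χ : ℕ → C(X, ℝ), (∀ n, HasCompactSupport (χ n)) ∧ (∀ n x, χ n x ∈ Set.Icc 0 1) ∧
      ∀ x, Tendsto (fun n => χ n x) atTop (𝓝 1) := by
  choose χ hχ1 _ hχc hχ01 using fun n => exists_continuous_one_zero_of_isCompact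
    (isCompact_compactCovering X n) isClosed_empty (Set.disjoint_empty _)
  refine ⟨χ, hχc, hχ01, fun x => tendsto_const_nhds.congr' ?_⟩
  obtain ⟨N, hN⟩ := exists_mem_compactCovering x
  filter_upwards [eventually_ge_atTop N] with n hn
  exact (hχ1 n (compactCovering_subset X hn hN)).symm

variable [MeasurableSpace X] [OpensMeasurableSpace X] {ι : Type*} {L : Filter ι}
  {μs : ι → Measure X} [∀ i, IsProbabilityMeasure (μs i)] {μ : Measure X} [IsProbabilityMeasure μ]

lemma integral_le_liminf_integral_of_tendsto_integral_compactlySupported [L.NeBot]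
    (h : ∀ g : C_c(X, ℝ), Tendsto (fun i => ∫ x, g x ∂μs i) L (𝓝 (∫ x, g x ∂μ)))
    (f : X →ᵇ ℝ) (hf : 0 ≤ f) : ∫ x, f x ∂μ ≤ L.liminf fun i => ∫ x, f x ∂μs i := by
  obtain ⟨χ, hχc, hχ01, hχ⟩ := exists_seq_hasCompactSupport_tendsto_one (X := X)
  let g (n : ℕ) : C_c(X, ℝ) := ⟨f.toContinuousMap * χ n, (hχc n).mul_left⟩
  have hg_le (n : ℕ) (x : X) : g n x ≤ f x :=
    mul_le_of_le_one_right (hf x) (hχ01 n x).2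
  have hg_norm_le (n : ℕ) (x : X) : ‖g n x‖ ≤ ‖f‖ := by
    calc ‖g n x‖ = ‖f x‖ * |χ n x| := norm_mul _ _
      _ ≤ ‖f x‖ * 1 := by
        gcongr; exact abs_le.2 ⟨by linarith [(hχ01 n x).1], (hχ01 n x).2⟩
      _ ≤ ‖f‖ := by rw [mul_one]; exact f.norm_coe_le_norm x
  have h_bdd : IsBoundedUnder (· ≤ ·) L fun i => ∫ x, f x ∂μs i :=
    isBoundedUnder_of ⟨‖f‖, fun i => (le_abs_self _).trans (f.norm_integral_le_norm (μs i))⟩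
  have hg_le_liminf (n : ℕ) : ∫ x, g n x ∂μ ≤ L.liminf fun i => ∫ x, f x ∂μs i := by
    rw [← (h (g n)).liminf_eq]
    refine liminf_le_liminf (Eventually.of_forall fun i => integral_mono ?_ (f.integrable _)
      (hg_le n)) (h (g n)).isBoundedUnder_ge h_bdd.isCoboundedUnder_ge
    exact (g n).continuous.integrable_of_hasCompactSupport (g n).hasCompactSupport
  have hg_tendsto : Tendsto (fun n => ∫ x, g n x ∂μ) atTop (𝓝 (∫ x, f x ∂μ)) := by
    refine tendsto_integral_of_dominated_convergence (fun _ => ‖f‖)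
      (fun n => (g n).continuous.aestronglyMeasurable) (integrable_const _)
      (fun n => Eventually.of_forall (hg_norm_le n)) (Eventually.of_forall fun x => ?_)
    simpa [g] using (hχ x).const_mul (f x)
  exact le_of_tendsto' hg_tendsto hg_le_liminf

theorem tendsto_integral_of_tendsto_integral_compactlySupported
    (h : ∀ g : C_c(X, ℝ), Tendsto (fun i => ∫ x, g x ∂μs i) L (𝓝 (∫ x, g x ∂μ)))
    (f : X →ᵇ ℝ) : Tendsto (fun i => ∫ x, f x ∂μs i) L (𝓝 (∫ x, f x ∂μ)) := by
  rcases L.eq_or_neBot with rfl | _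
  · exact tendsto_bot
  exact BoundedContinuousFunction.tendsto_integral_of_forall_integral_le_liminf_integral
    (fun f hf => integral_le_liminf_integral_of_tendsto_integral_compactlySupported h f hf) f

end CompactlySupported

section OnePoint

namespace ZeroAtInftyContinuousMap

variable {X M : Type*} [TopologicalSpace X] [R1Space X] [TopologicalSpace M] [Zero M]

def toOnePoint (f : C₀(X, M)) : C(OnePoint X, M) where
  toFun p := p.elim 0 f
  continuous_toFun := (OnePoint.continuous_iff _).2
    ⟨by rw [coclosedCompact_eq_cocompact]; exact f.zero_at_infty', f.continuous⟩

@[simp] lemma toOnePoint_coe (f : C₀(X, M)) (x : X) : f.toOnePoint x = f x := rfl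

end ZeroAtInftyContinuousMap

variable {X ι : Type*} [TopologicalSpace X] [LocallyCompactSpace X] [T2Space X]
  [MeasurableSpace X] [OpensMeasurableSpace X] {L : Filter ι}
  {μs : ι → Measure X} [∀ i, IsProbabilityMeasure (μs i)] {μ : Measure X} [IsProbabilityMeasure μ]

theorem tendsto_integral_onePoint_of_separatesPoints (S : Submonoid C(OnePoint X, ℝ))
    (hS : (Algebra.adjoin ℝ (S : Set C(OnePoint X, ℝ))).SeparatesPoints)
    (h : ∀ F ∈ S, Tendsto (fun i => ∫ x, F x ∂μs i) L (𝓝 (∫ x, F x ∂μ)))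
    (F : C(OnePoint X, ℝ)) : Tendsto (fun i => ∫ x, F x ∂μs i) L (𝓝 (∫ x, F x ∂μ)) := by
  let restrict : C(OnePoint X, ℝ) →L[ℝ] X →ᵇ ℝ :=
    (BoundedContinuousFunction.compContinuousCLM ℝ ℝ
      ⟨((↑) : X → OnePoint X), OnePoint.continuous_coe⟩).comp
      (ContinuousMap.linearIsometryBoundedOfCompact (OnePoint X) ℝ ℝ
        |>.toLinearIsometry.toContinuousLinearMap)
  let T := (tendstoIntegralSubmodule μs L μ).comap restrict.toLinearMap
  have hT : IsClosed (T : Set C(OnePoint X, ℝ)) :=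
    (isClosed_tendstoIntegralSubmodule μs L μ).preimage restrict.continuous
  have hST : Subalgebra.toSubmodule (Algebra.adjoin ℝ (S : Set C(OnePoint X, ℝ))) ≤ T :=
    (Algebra.adjoin_toSubmodule_le ℝ).2 (by rw [Submonoid.closure_eq]; exact h)
  have hF : F ∈ (Algebra.adjoin ℝ (S : Set C(OnePoint X, ℝ))).topologicalClosure := by
    rw [ContinuousMap.subalgebra_topologicalClosure_eq_top_of_separatesPoints _ hS]
    trivial
  exact closure_minimal hST hT hF

end OnePoint

namespace GaussianFamily

variable {m : ℕ}

lemma continuous_gaussFn {n : ℕ} (q : Fin n → ℚ) (xs : Fin n → Fin m → ℚ) :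
    Continuous (gaussFn n q xs) := by
  unfold gaussFn; fun_prop

lemma gaussFn_zero (q : Fin 0 → ℚ) (xs : Fin 0 → Fin m → ℚ) (y : EuclideanSpace ℝ (Fin m)) :
    gaussFn 0 q xs y = 1 := by
  simp [gaussFn]

lemma gaussFn_mul_gaussFn {n n' : ℕ} (q : Fin n → ℚ) (q' : Fin n' → ℚ)
    (xs : Fin n → Fin m → ℚ) (xs' : Fin n' → Fin m → ℚ) (y : EuclideanSpace ℝ (Fin m)) :
    gaussFn n q xs y * gaussFn n' q' xs' y =
      gaussFn (n + n') (Fin.append q q') (Fin.append xs xs') y := by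
  simp only [gaussFn, ← Real.exp_add, Fin.sum_univ_add, Fin.append_left, Fin.append_right]
  ring_nf

lemma tendsto_gaussFn_cocompact {n : ℕ} [NeZero n] {q : Fin n → ℚ} (hq : ∀ j, 0 < q j)
    (xs : Fin n → Fin m → ℚ) :
    Tendsto (gaussFn n q xs) (cocompact (EuclideanSpace ℝ (Fin m))) (𝓝 0) := by
  set x₀ : EuclideanSpace ℝ (Fin m) := (WithLp.equiv 2 (Fin m → ℝ)).symm fun i => (xs 0 i : ℝ)
  have h_le (y : EuclideanSpace ℝ (Fin m)) :
      gaussFn n q xs y ≤ Real.exp (-(q 0 * dist y x₀ ^ 2)) := by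
    refine Real.exp_le_exp.2 (neg_le_neg ?_)
    rw [dist_eq_norm]
    exact Finset.single_le_sum (f := fun j => (q j : ℝ) *
      ‖y - (WithLp.equiv 2 (Fin m → ℝ)).symm fun i => (xs j i : ℝ)‖ ^ 2)
      (fun j _ => by have := hq j; positivity) (Finset.mem_univ 0)
  have h_bound : Tendsto (fun y => Real.exp (-(q 0 * dist y x₀ ^ 2))) (cocompact _) (𝓝 0) :=
    Real.tendsto_exp_atBot.comp <| (tendsto_neg_atTop_atBot (G := ℝ)).comp <|
      ((tendsto_pow_atTop two_ne_zero).comp (tendsto_dist_right_cocompact_atTop x₀)).const_mul_atTop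
        (by exact_mod_cast hq 0)
  exact squeeze_zero (fun y => (Real.exp_pos _).le) h_le h_bound

/-- Only the restriction to `ℝ^m` is prescribed: integrals never see the value at `∞`, and
leaving it free puts the empty product `1` in the family. -/
def gaussianSubmonoid (m : ℕ) : Submonoid C(OnePoint (EuclideanSpace ℝ (Fin m)), ℝ) where
  carrier := {F | ∃ (n : ℕ) (q : Fin n → ℚ) (xs : Fin n → Fin m → ℚ), (∀ j, 0 < q j) ∧
    ∀ y : EuclideanSpace ℝ (Fin m), F y = gaussFn n q xs y}
  one_mem' := ⟨0, Fin.elim0, Fin.elim0, Fin.rec0, fun y => (gaussFn_zero _ _ y).symm⟩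
  mul_mem' := by
    rintro F G ⟨n, q, xs, hq, hF⟩ ⟨n', q', xs', hq', hG⟩
    refine ⟨n + n', Fin.append q q', Fin.append xs xs',
      Fin.addCases (by simpa using hq) (by simpa using hq'), fun y => ?_⟩
    rw [ContinuousMap.mul_apply, hF, hG, gaussFn_mul_gaussFn]

lemma denseRange_toLp_ratCast :
    DenseRange fun c : Fin m → ℚ => (WithLp.equiv 2 (Fin m → ℝ)).symm fun i => (c i : ℝ) :=
  (WithLp.equiv 2 (Fin m → ℝ)).symm.surjective.denseRange.comp
    (DenseRange.piMap fun _ => Rat.denseRange_cast) (PiLp.continuous_toLp 2 _)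

lemma separatesPoints_adjoin_gaussianSubmonoid :
    (Algebra.adjoin ℝ
      (gaussianSubmonoid m : Set C(OnePoint (EuclideanSpace ℝ (Fin m)), ℝ))).SeparatesPoints := by
  let bump (c : Fin m → ℚ) : C(OnePoint (EuclideanSpace ℝ (Fin m)), ℝ) :=
    ZeroAtInftyContinuousMap.toOnePoint ⟨⟨gaussFn 1 1 fun _ => c, continuous_gaussFn _ _⟩,
      tendsto_gaussFn_cocompact (fun _ => one_pos) _⟩
  have bump_coe (c : Fin m → ℚ) (y : EuclideanSpace ℝ (Fin m)) :
      bump c y = Real.exp (-dist y ((WithLp.equiv 2 (Fin m → ℝ)).symm fun i => (c i : ℝ)) ^ 2) := by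
    simp [bump, gaussFn, dist_eq_norm]
  have bump_ne_infty (y : EuclideanSpace ℝ (Fin m)) : bump 0 y ≠ bump 0 OnePoint.infty := by
    rw [bump_coe]
    exact (Real.exp_pos _).ne'
  suffices ∀ ⦃p p'⦄, p ≠ p' → ∃ c, bump c p ≠ bump c p' by
    intro p p' hp
    obtain ⟨c, hc⟩ := this hp
    exact ⟨_, ⟨bump c, Algebra.subset_adjoin ⟨1, 1, fun _ => c, fun _ => one_pos, fun _ => rfl⟩,
      rfl⟩, hc⟩
  intro p p' hp
  induction p using OnePoint.rec with
  | infty =>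
    induction p' using OnePoint.rec with
    | infty => exact absurd rfl hp
    | coe y => exact ⟨0, (bump_ne_infty y).symm⟩
  | coe x =>
    induction p' using OnePoint.rec with
    | infty => exact ⟨0, bump_ne_infty x⟩
    | coe y =>
      have hxy : 0 < dist x y := dist_pos.2 fun h => hp (congrArg _ h)
      obtain ⟨c, hc⟩ := denseRange_toLp_ratCast.exists_dist_lt x (half_pos hxy)
      refine ⟨c, ne_of_gt ?_⟩
      rw [bump_coe, bump_coe, Real.exp_lt_exp, neg_lt_neg_iff]
      refine pow_lt_pow_left₀ ?_ dist_nonneg two_ne_zero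
      linarith [dist_triangle_right x y ((WithLp.equiv 2 (Fin m → ℝ)).symm fun i => (c i : ℝ))]

end GaussianFamily

/-- The Gaussian family `G_m` is convergence determining: if `(μ_k)` and `μ` are Borel
probability measures on `ℝ^m` such that `∫ φ dμ_k → ∫ φ dμ` for every member `φ` of the
Gaussian family, then `μ_k` converges weakly to `μ`, i.e. `∫ f dμ_k → ∫ f dμ` for every
bounded continuous `f : ℝ^m → ℝ`. -/
theorem gaussian_family_convergence_determining
    (m : ℕ) (μs : ℕ → Measure (EuclideanSpace ℝ (Fin m)))
    (μ : Measure (EuclideanSpace ℝ (Fin m)))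
    [∀ k, IsProbabilityMeasure (μs k)] [IsProbabilityMeasure μ]
    (h : ∀ (n : ℕ) (q : Fin n → ℚ) (xs : Fin n → Fin m → ℚ), (∀ j, 0 < q j) →
      Tendsto (fun k => ∫ y, gaussFn n q xs y ∂(μs k)) atTop
        (𝓝 (∫ y, gaussFn n q xs y ∂μ))) :
    ∀ f : BoundedContinuousFunction (EuclideanSpace ℝ (Fin m)) ℝ,
      Tendsto (fun k => ∫ y, f y ∂(μs k)) atTop (𝓝 (∫ y, f y ∂μ)) := by
  refine tendsto_integral_of_tendsto_integral_compactlySupported fun g => ?_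
  have h_gaussian : ∀ F ∈ GaussianFamily.gaussianSubmonoid m,
      Tendsto (fun k => ∫ y, F y ∂μs k) atTop (𝓝 (∫ y, F y ∂μ)) := by
    rintro F ⟨n, q, xs, hq, hF⟩
    simpa only [hF] using h n q xs hq
  simpa using tendsto_integral_onePoint_of_separatesPoints _
    GaussianFamily.separatesPoints_adjoin_gaussianSubmonoid h_gaussian
    (g : C₀(EuclideanSpace ℝ (Fin m), ℝ)).toOnePoint
end
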